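/- On the algebra 𝒜, the SUSY covariant derivatives satisfy D₋∘D₋ = −½∂₋, D₊∘D₊ = −½∂₊, and D₋∘D₊ − D₊∘D₋ = −∂_z as ℝ-linear operators; i.e. in graded-bracket form [D₋,D₋] = −P₋, [D₊,D₊] = −P₊, [D₋,D₊] = −Z with P₋ = ∂₋, P₊ = ∂₊, Z = ∂_z. -/

import Mathlib

noncomputable section

/-- The group `ℤ₂ × ℤ₂`. -/
abbrev G2 : Type := ZMod 2 × ZMod 2

/-- The standard scalar product on `ℤ₂ × ℤ₂`. -/
def ip (γ γ' : G2) : ZMod 2 := γ.1 * γ'.1 + γ.2 * γ'.2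

/-- The Koszul sign `(-1)^x`. -/
def ksign (x : ZMod 2) : ℝ := if x = 0 then 1 else -1

/-- Two-dimensional Minkowski spacetime in light-cone coordinates `(x⁻, x⁺)`. -/
abbrev E2 : Type := ℝ × ℝ

/-- Coefficient families `(k, a, b) ↦ f_{k,a,b}` representing the elements
`Σ_{k,a,b} z^k θ₋^a θ₊^b f_{k,a,b}(x⁻,x⁺)` of the `ℤ₂²`-graded algebra `𝒜_A` of superfields on
`ℤ₂²`-Minkowski spacetime `ℝ^{2|1,1,1}`. -/
abbrev SF (A : Type*) : Type _ := ℕ → Bool → Bool → (E2 → A)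

/-- `Bool → ZMod 2`. -/
def bz (a : Bool) : ZMod 2 := if a then 1 else 0

/-- The `ℤ₂²`-degree of the monomial `z^k θ₋^a θ₊^b`, where `deg z = (1,1)`,
`deg θ₋ = (0,1)` and `deg θ₊ = (1,0)`. -/
def mdeg (k : ℕ) (a b : Bool) : G2 := ((k : ZMod 2) + bz b, (k : ZMod 2) + bz a)

/-- The light-cone partial derivative `∂₋`. -/
def pdm {W : Type*} [NormedAddCommGroup W] [NormedSpace ℝ W] (f : E2 → W) : E2 → W :=
  fun p => fderiv ℝ f p (1, 0)

/-- The light-cone partial derivative `∂₊`. -/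
def pdp {W : Type*} [NormedAddCommGroup W] [NormedSpace ℝ W] (f : E2 → W) : E2 → W :=
  fun p => fderiv ℝ f p (0, 1)

namespace SF

variable {A : Type*} [NormedRing A] [NormedAlgebra ℝ A]

/-- `∂₋` acting coefficientwise on superfields. -/
def Pm (c : SF A) : SF A := fun k a b => pdm (c k a b)

/-- `∂₊` acting coefficientwise on superfields. -/
def Pp (c : SF A) : SF A := fun k a b => pdp (c k a b)

/-- `∂_z`, acting on normal-form monomials by `∂_z(z^k θ₋^a θ₊^b f) = k z^{k-1} θ₋^a θ₊^b f`. -/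
def Pz (c : SF A) : SF A := fun k a b => ((k + 1 : ℕ) : ℝ) • c (k + 1) a b

/-- `∂_{θ₋}`, acting by `∂_{θ₋}(z^k θ₋^a θ₊^b f) = (-1)^k a z^k θ₊^b f`. -/
def Dthm (c : SF A) : SF A := fun k a b => if a then 0 else ((-1 : ℝ) ^ k) • c k true b

/-- `∂_{θ₊}`, acting by `∂_{θ₊}(z^k θ₋^a θ₊^b f) = (-1)^k b z^k θ₋^a f`. -/
def Dthp (c : SF A) : SF A := fun k a b => if b then 0 else ((-1 : ℝ) ^ k) • c k a true

/-- Left multiplication by `θ₋` (recall `z θ₋ = -θ₋ z`). -/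
def Mthm (c : SF A) : SF A := fun k a b => if a then ((-1 : ℝ) ^ k) • c k false b else 0

/-- Left multiplication by `θ₊` (recall `z θ₊ = -θ₊ z`). -/
def Mthp (c : SF A) : SF A := fun k a b => if b then ((-1 : ℝ) ^ k) • c k a false else 0

/-- The supercharge `Q₋ = ∂_{θ₋} + ½ θ₋ ∂₋ − ½ θ₊ ∂_z`. -/
def Qm (c : SF A) : SF A := Dthm c + (1/2 : ℝ) • Mthm (Pm c) - (1/2 : ℝ) • Mthp (Pz c)

/-- The supercharge `Q₊ = ∂_{θ₊} + ½ θ₊ ∂₊ + ½ θ₋ ∂_z`. -/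
def Qp (c : SF A) : SF A := Dthp c + (1/2 : ℝ) • Mthp (Pp c) + (1/2 : ℝ) • Mthm (Pz c)

/-- The SUSY covariant derivative `D₋ = ∂_{θ₋} − ½ θ₋ ∂₋ + ½ θ₊ ∂_z`. -/
def Dm (c : SF A) : SF A := Dthm c - (1/2 : ℝ) • Mthm (Pm c) + (1/2 : ℝ) • Mthp (Pz c)

/-- The SUSY covariant derivative `D₊ = ∂_{θ₊} − ½ θ₊ ∂₊ − ½ θ₋ ∂_z`. -/
def Dp (c : SF A) : SF A := Dthp c - (1/2 : ℝ) • Mthp (Pp c) - (1/2 : ℝ) • Mthm (Pz c)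

end SF

namespace SF

/-! ### Auxiliary lemmas -/

lemma cd_diff {f : E2 → ℝ} (hf : ContDiff ℝ (⊤:ℕ∞) f) : Differentiable ℝ f :=
  hf.differentiable (by simp)

lemma pdm_zero : pdm (0 : E2 → ℝ) = 0 := by
  funext p
  rw [show (0 : E2 → ℝ) = fun _ => (0:ℝ) from rfl]
  simp [pdm, fderiv_const]

lemma pdp_zero : pdp (0 : E2 → ℝ) = 0 := by
  funext p
  rw [show (0 : E2 → ℝ) = fun _ => (0:ℝ) from rfl]
  simp [pdp, fderiv_const]

lemma pdm_add' {f g : E2 → ℝ} (hf : Differentiable ℝ f) (hg : Differentiable ℝ g) :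
    pdm (f + g) = pdm f + pdm g := by
  funext p
  simp only [pdm, Pi.add_apply, fderiv_add (hf p) (hg p)]
  rfl

lemma pdp_add' {f g : E2 → ℝ} (hf : Differentiable ℝ f) (hg : Differentiable ℝ g) :
    pdp (f + g) = pdp f + pdp g := by
  funext p
  simp only [pdp, Pi.add_apply, fderiv_add (hf p) (hg p)]
  rfl

lemma pdm_smul' (r : ℝ) {f : E2 → ℝ} (hf : Differentiable ℝ f) :
    pdm (r • f) = r • pdm f := by
  funext p
  have : fderiv ℝ (r • f) p = r • fderiv ℝ f p := by
    rw [show r • f = fun y => r • f y from rfl, fderiv_fun_const_smul (hf p) r]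
  simp [pdm, this]

lemma pdp_smul' (r : ℝ) {f : E2 → ℝ} (hf : Differentiable ℝ f) :
    pdp (r • f) = r • pdp f := by
  funext p
  have : fderiv ℝ (r • f) p = r • fderiv ℝ f p := by
    rw [show r • f = fun y => r • f y from rfl, fderiv_fun_const_smul (hf p) r]
  simp [pdp, this]

lemma contDiff_pdm {f : E2 → ℝ} (hf : ContDiff ℝ (⊤:ℕ∞) f) : ContDiff ℝ (⊤:ℕ∞) (pdm f) :=
  (ContinuousLinearMap.apply ℝ ℝ ((1,0):E2)).contDiff.comp (hf.fderiv_right (by simp))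

lemma contDiff_pdp {f : E2 → ℝ} (hf : ContDiff ℝ (⊤:ℕ∞) f) : ContDiff ℝ (⊤:ℕ∞) (pdp f) :=
  (ContinuousLinearMap.apply ℝ ℝ ((0,1):E2)).contDiff.comp (hf.fderiv_right (by simp))

lemma schwarz {f : E2 → ℝ} (hf : ContDiff ℝ (⊤:ℕ∞) f) : pdm (pdp f) = pdp (pdm f) := by
  funext p
  have hd : Differentiable ℝ f := cd_diff hf
  have hd2 : Differentiable ℝ (fderiv ℝ f) :=
    (hf.fderiv_right (m := (⊤:ℕ∞)) (by simp)).differentiable (by simp)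
  have hsym := second_derivative_symmetric (f := f) (f' := fderiv ℝ f)
    (f'' := fderiv ℝ (fderiv ℝ f) p) (fun y => (hd y).hasFDerivAt) (hd2 p).hasFDerivAt
  have e1 : ∀ v w : E2, fderiv ℝ (fun q => fderiv ℝ f q v) p w
      = fderiv ℝ (fderiv ℝ f) p w v := by
    intro v w
    rw [fderiv_clm_apply (hd2 p) (differentiableAt_const v)]
    simp
  show fderiv ℝ (fun q => fderiv ℝ f q (0,1)) p (1,0)
      = fderiv ℝ (fun q => fderiv ℝ f q (1,0)) p (0,1)
  rw [e1, e1, hsym]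

/-- Smooth superfield coefficient families. -/
def Sm (x : SF ℝ) : Prop := ∀ k a b, ContDiff ℝ (⊤:ℕ∞) (x k a b)

variable {x y : SF ℝ} {r : ℝ}

lemma Sm_add (hx : Sm x) (hy : Sm y) : Sm (x + y) := fun k a b => (hx k a b).add (hy k a b)
lemma Sm_sub (hx : Sm x) (hy : Sm y) : Sm (x - y) := fun k a b => (hx k a b).sub (hy k a b)
lemma Sm_smul (hx : Sm x) : Sm (r • x) := fun k a b => (hx k a b).const_smul r
lemma Sm_neg (hx : Sm x) : Sm (-x) := fun k a b => (hx k a b).neg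
lemma Sm_zero : Sm (0 : SF ℝ) := fun _ _ _ => contDiff_const
lemma Sm_Pm (hx : Sm x) : Sm (Pm x) := fun k a b => contDiff_pdm (hx k a b)
lemma Sm_Pp (hx : Sm x) : Sm (Pp x) := fun k a b => contDiff_pdp (hx k a b)
lemma Sm_Pz (hx : Sm x) : Sm (Pz x) := by
  intro k a b
  show ContDiff ℝ (⊤:ℕ∞) (fun p => ((k+1:ℕ):ℝ) • x (k+1) a b p)
  exact (hx (k+1) a b).const_smul _
lemma Sm_Dthm (hx : Sm x) : Sm (Dthm x) := by
  intro k a b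
  cases a
  · exact (hx k true b).const_smul ((-1:ℝ)^k)
  · exact contDiff_const
lemma Sm_Dthp (hx : Sm x) : Sm (Dthp x) := by
  intro k a b
  cases b
  · exact (hx k a true).const_smul ((-1:ℝ)^k)
  · exact contDiff_const
lemma Sm_Mthm (hx : Sm x) : Sm (Mthm x) := by
  intro k a b
  cases a
  · exact contDiff_const
  · exact (hx k false b).const_smul ((-1:ℝ)^k)
lemma Sm_Mthp (hx : Sm x) : Sm (Mthp x) := by
  intro k a b
  cases b
  · exact contDiff_const
  · exact (hx k a false).const_smul ((-1:ℝ)^k)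

/-! ### Linearity of the pointwise operators -/

lemma Pz_add : Pz (x + y) = Pz x + Pz y := by
  funext k a b; simp [Pz, smul_add]
lemma Pz_sub : Pz (x - y) = Pz x - Pz y := by
  funext k a b; simp [Pz, smul_sub]
lemma Pz_smul : Pz (r • x) = r • Pz x := by
  funext k a b; simp [Pz]; module
lemma Pz_neg : Pz (-x) = -(Pz x) := by
  funext k a b; simp [Pz]
lemma Pz_zero : Pz (0 : SF ℝ) = 0 := by
  funext k a b; simp [Pz]

lemma Dthm_add : Dthm (x + y) = Dthm x + Dthm y := by
  funext k a b; cases a <;> simp [Dthm, smul_add]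
lemma Dthm_sub : Dthm (x - y) = Dthm x - Dthm y := by
  funext k a b; cases a <;> simp [Dthm, smul_sub]
lemma Dthm_smul : Dthm (r • x) = r • Dthm x := by
  funext k a b; cases a <;> simp [Dthm] <;> module
lemma Dthm_neg : Dthm (-x) = -(Dthm x) := by
  funext k a b; cases a <;> simp [Dthm]
lemma Dthm_zero : Dthm (0 : SF ℝ) = 0 := by
  funext k a b; cases a <;> simp [Dthm]

lemma Dthp_add : Dthp (x + y) = Dthp x + Dthp y := by
  funext k a b; cases b <;> simp [Dthp, smul_add]
lemma Dthp_sub : Dthp (x - y) = Dthp x - Dthp y := by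
  funext k a b; cases b <;> simp [Dthp, smul_sub]
lemma Dthp_smul : Dthp (r • x) = r • Dthp x := by
  funext k a b; cases b <;> simp [Dthp] <;> module
lemma Dthp_neg : Dthp (-x) = -(Dthp x) := by
  funext k a b; cases b <;> simp [Dthp]
lemma Dthp_zero : Dthp (0 : SF ℝ) = 0 := by
  funext k a b; cases b <;> simp [Dthp]

lemma Mthm_add : Mthm (x + y) = Mthm x + Mthm y := by
  funext k a b; cases a <;> simp [Mthm, smul_add]
lemma Mthm_sub : Mthm (x - y) = Mthm x - Mthm y := by
  funext k a b; cases a <;> simp [Mthm, smul_sub]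
lemma Mthm_smul : Mthm (r • x) = r • Mthm x := by
  funext k a b; cases a <;> simp [Mthm] <;> module
lemma Mthm_neg : Mthm (-x) = -(Mthm x) := by
  funext k a b; cases a <;> simp [Mthm]
lemma Mthm_zero : Mthm (0 : SF ℝ) = 0 := by
  funext k a b; cases a <;> simp [Mthm]

lemma Mthp_add : Mthp (x + y) = Mthp x + Mthp y := by
  funext k a b; cases b <;> simp [Mthp, smul_add]
lemma Mthp_sub : Mthp (x - y) = Mthp x - Mthp y := by
  funext k a b; cases b <;> simp [Mthp, smul_sub]
lemma Mthp_smul : Mthp (r • x) = r • Mthp x := by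
  funext k a b; cases b <;> simp [Mthp] <;> module
lemma Mthp_neg : Mthp (-x) = -(Mthp x) := by
  funext k a b; cases b <;> simp [Mthp]
lemma Mthp_zero : Mthp (0 : SF ℝ) = 0 := by
  funext k a b; cases b <;> simp [Mthp]

/-! ### Linearity of `Pm`, `Pp` and commutation relations -/

lemma pdm_sub' {f g : E2 → ℝ} (hf : Differentiable ℝ f) (hg : Differentiable ℝ g) :
    pdm (f - g) = pdm f - pdm g := by
  funext p
  simp only [pdm, Pi.sub_apply, fderiv_sub (hf p) (hg p)]
  rfl

lemma pdp_sub' {f g : E2 → ℝ} (hf : Differentiable ℝ f) (hg : Differentiable ℝ g) :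
    pdp (f - g) = pdp f - pdp g := by
  funext p
  simp only [pdp, Pi.sub_apply, fderiv_sub (hf p) (hg p)]
  rfl

lemma pdm_neg' {f : E2 → ℝ} : pdm (-f) = -(pdm f) := by
  funext p
  have : fderiv ℝ (-f) p = -fderiv ℝ f p := by
    rw [show (-f) = fun y => -f y from rfl, fderiv_fun_neg]
  simp [pdm, this]

lemma pdp_neg' {f : E2 → ℝ} : pdp (-f) = -(pdp f) := by
  funext p
  have : fderiv ℝ (-f) p = -fderiv ℝ f p := by
    rw [show (-f) = fun y => -f y from rfl, fderiv_fun_neg]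
  simp [pdp, this]

lemma Pm_add (hx : Sm x) (hy : Sm y) : Pm (x + y) = Pm x + Pm y := by
  funext k a b
  exact pdm_add' (cd_diff (hx k a b)) (cd_diff (hy k a b))

lemma Pm_sub (hx : Sm x) (hy : Sm y) : Pm (x - y) = Pm x - Pm y := by
  funext k a b
  exact pdm_sub' (cd_diff (hx k a b)) (cd_diff (hy k a b))

lemma Pm_smul (hx : Sm x) : Pm (r • x) = r • Pm x := by
  funext k a b
  exact pdm_smul' r (cd_diff (hx k a b))

lemma Pm_neg : Pm (-x) = -(Pm x) := by
  funext k a b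
  exact pdm_neg'

lemma Pm_zero : Pm (0 : SF ℝ) = 0 := by
  funext k a b
  exact pdm_zero

lemma Pp_add (hx : Sm x) (hy : Sm y) : Pp (x + y) = Pp x + Pp y := by
  funext k a b
  exact pdp_add' (cd_diff (hx k a b)) (cd_diff (hy k a b))

lemma Pp_sub (hx : Sm x) (hy : Sm y) : Pp (x - y) = Pp x - Pp y := by
  funext k a b
  exact pdp_sub' (cd_diff (hx k a b)) (cd_diff (hy k a b))

lemma Pp_smul (hx : Sm x) : Pp (r • x) = r • Pp x := by
  funext k a b
  exact pdp_smul' r (cd_diff (hx k a b))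

lemma Pp_neg : Pp (-x) = -(Pp x) := by
  funext k a b
  exact pdp_neg'

lemma Pp_zero : Pp (0 : SF ℝ) = 0 := by
  funext k a b
  exact pdp_zero

lemma Pm_Pp (hx : Sm x) : Pm (Pp x) = Pp (Pm x) := by
  funext k a b
  exact schwarz (hx k a b)

lemma Pm_Pz (hx : Sm x) : Pm (Pz x) = Pz (Pm x) := by
  funext k a b
  exact pdm_smul' _ (cd_diff (hx (k+1) a b))

lemma Pp_Pz (hx : Sm x) : Pp (Pz x) = Pz (Pp x) := by
  funext k a b
  exact pdp_smul' _ (cd_diff (hx (k+1) a b))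

lemma Pm_Dthm (hx : Sm x) : Pm (Dthm x) = Dthm (Pm x) := by
  funext k a b
  cases a
  · exact pdm_smul' _ (cd_diff (hx k true b))
  · exact pdm_zero

lemma Pm_Dthp (hx : Sm x) : Pm (Dthp x) = Dthp (Pm x) := by
  funext k a b
  cases b
  · exact pdm_smul' _ (cd_diff (hx k a true))
  · exact pdm_zero

lemma Pp_Dthm (hx : Sm x) : Pp (Dthm x) = Dthm (Pp x) := by
  funext k a b
  cases a
  · exact pdp_smul' _ (cd_diff (hx k true b))
  · exact pdp_zero

lemma Pp_Dthp (hx : Sm x) : Pp (Dthp x) = Dthp (Pp x) := by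
  funext k a b
  cases b
  · exact pdp_smul' _ (cd_diff (hx k a true))
  · exact pdp_zero

lemma Pm_Mthm (hx : Sm x) : Pm (Mthm x) = Mthm (Pm x) := by
  funext k a b
  cases a
  · exact pdm_zero
  · exact pdm_smul' _ (cd_diff (hx k false b))

lemma Pm_Mthp (hx : Sm x) : Pm (Mthp x) = Mthp (Pm x) := by
  funext k a b
  cases b
  · exact pdm_zero
  · exact pdm_smul' _ (cd_diff (hx k a false))

lemma Pp_Mthm (hx : Sm x) : Pp (Mthm x) = Mthm (Pp x) := by
  funext k a b
  cases a
  · exact pdp_zero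
  · exact pdp_smul' _ (cd_diff (hx k false b))

lemma Pp_Mthp (hx : Sm x) : Pp (Mthp x) = Mthp (Pp x) := by
  funext k a b
  cases b
  · exact pdp_zero
  · exact pdp_smul' _ (cd_diff (hx k a false))

/-! ### Index-level (anti)commutation relations -/

lemma Pz_Dthm : Pz (Dthm x) = -(Dthm (Pz x)) := by
  funext k a b
  cases a <;> simp [Pz, Dthm, pow_succ] <;> module

lemma Pz_Dthp : Pz (Dthp x) = -(Dthp (Pz x)) := by
  funext k a b
  cases b <;> simp [Pz, Dthp, pow_succ] <;> module

lemma Pz_Mthm : Pz (Mthm x) = -(Mthm (Pz x)) := by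
  funext k a b
  cases a <;> simp [Pz, Mthm, pow_succ] <;> module

lemma Pz_Mthp : Pz (Mthp x) = -(Mthp (Pz x)) := by
  funext k a b
  cases b <;> simp [Pz, Mthp, pow_succ] <;> module

lemma Dthm_Dthm : Dthm (Dthm x) = 0 := by
  funext k a b
  cases a <;> simp [Dthm]

lemma Dthp_Dthp : Dthp (Dthp x) = 0 := by
  funext k a b
  cases b <;> simp [Dthp]

lemma Mthm_Mthm : Mthm (Mthm x) = 0 := by
  funext k a b
  cases a <;> simp [Mthm]

lemma Mthp_Mthp : Mthp (Mthp x) = 0 := by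
  funext k a b
  cases b <;> simp [Mthp]

lemma Dthp_Dthm : Dthp (Dthm x) = Dthm (Dthp x) := by
  funext k a b
  cases a <;> cases b <;> simp [Dthm, Dthp]

lemma Mthp_Mthm : Mthp (Mthm x) = Mthm (Mthp x) := by
  funext k a b
  cases a <;> cases b <;> simp [Mthm, Mthp]

lemma Dthm_Mthm : Dthm (Mthm x) = x - Mthm (Dthm x) := by
  funext k a b
  cases a <;> simp [Dthm, Mthm, smul_smul, ← mul_pow]

lemma Dthp_Mthp : Dthp (Mthp x) = x - Mthp (Dthp x) := by
  funext k a b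
  cases b <;> simp [Dthp, Mthp, smul_smul, ← mul_pow]

lemma Dthm_Mthp : Dthm (Mthp x) = Mthp (Dthm x) := by
  funext k a b
  cases a <;> cases b <;> simp [Dthm, Mthp, smul_smul, ← mul_pow]

lemma Dthp_Mthm : Dthp (Mthm x) = Mthm (Dthp x) := by
  funext k a b
  cases a <;> cases b <;> simp [Dthp, Mthm, smul_smul, ← mul_pow]

end SF

open SF in
/-- The SUSY covariant derivatives on `ℤ₂²`-Minkowski spacetime satisfy
`[D₋,D₋] = −P₋`, `[D₊,D₊] = −P₊`, `[D₋,D₊] = −Z`, i.e.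
`D₋∘D₋ = −½∂₋`, `D₊∘D₊ = −½∂₊` and `D₋∘D₊ − D₊∘D₋ = −∂_z`. -/
theorem z22_covariant_derivatives_brackets
    (c : SF ℝ) (hc : ∀ k a b, ContDiff ℝ (⊤ : ℕ∞) (c k a b)) :
    Dm (Dm c) = -((1/2 : ℝ) • Pm c) ∧
    Dp (Dp c) = -((1/2 : ℝ) • Pp c) ∧
    Dm (Dp c) - Dp (Dm c) = -(Pz c) := by
  have hSc : Sm c := hc
  refine ⟨?_, ?_, ?_⟩ <;>
  · simp (disch := apply_rules [hSc, Sm_add, Sm_sub, Sm_smul, Sm_neg, Sm_zero, Sm_Pm, Sm_Pp,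
        Sm_Pz, Sm_Dthm, Sm_Dthp, Sm_Mthm, Sm_Mthp]) only
      [Dm, Dp,
       Pm_add, Pm_sub, Pm_smul, Pm_neg, Pm_zero,
       Pp_add, Pp_sub, Pp_smul, Pp_neg, Pp_zero,
       Pz_add, Pz_sub, Pz_smul, Pz_neg, Pz_zero,
       Dthm_add, Dthm_sub, Dthm_smul, Dthm_neg, Dthm_zero,
       Dthp_add, Dthp_sub, Dthp_smul, Dthp_neg, Dthp_zero,
       Mthm_add, Mthm_sub, Mthm_smul, Mthm_neg, Mthm_zero,
       Mthp_add, Mthp_sub, Mthp_smul, Mthp_neg, Mthp_zero,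
       Pm_Pp, Pm_Pz, Pp_Pz,
       Pm_Dthm, Pm_Dthp, Pp_Dthm, Pp_Dthp,
       Pm_Mthm, Pm_Mthp, Pp_Mthm, Pp_Mthp,
       Pz_Dthm, Pz_Dthp, Pz_Mthm, Pz_Mthp,
       Dthm_Dthm, Dthp_Dthp, Mthm_Mthm, Mthp_Mthp,
       Dthp_Dthm, Mthp_Mthm, Dthm_Mthm, Dthp_Mthp, Dthm_Mthp, Dthp_Mthm,
       smul_zero, smul_add, smul_sub, smul_neg, neg_zero, add_zero, zero_add, sub_zero,
       zero_sub, neg_neg, smul_smul]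
    simp only [Pm_Dthm hSc, Pm_Dthp hSc, Pp_Dthm hSc, Pp_Dthp hSc, Pm_Pz hSc, Pp_Pz hSc, Pm_Pp hSc]
    module
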